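/- arXiv:math/0502389 — 2 statements merged into one kernel-verified Lean document; each statement's English description precedes it below -/
import Mathlib

section
/- Let (K_{i(e)}, w_e, p_e)_{e∈E} be a contractive Markov system with average contracting rate 0 < a < 1 satisfying the standing assumptions, with generalized Markov measure M and coding map F. If the invariant Borel probability measure μ of the system is unique, then the pushforward of M under F equals μ, i.e. F_*M = μ. -/
open MeasureTheory Filter ENNReal

/-- The modulus of uniform continuity of a real-valued function on a
(pseudo)metric space, valued in `ℝ≥0∞`. -/
noncomputable def modulus {X : Type*} [PseudoMetricSpace X] (h : X → ℝ) (t : ℝ) : ℝ≥0∞ :=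
  ⨆ (x : X) (y : X) (_ : dist x y ≤ t), ENNReal.ofReal |h x - h y|

/-- A function is Dini-continuous if `∫_0^c φ(t)/t dt < ∞` for some `c > 0`,
where `φ` is its modulus of uniform continuity. -/
def DiniContinuous {X : Type*} [PseudoMetricSpace X] (h : X → ℝ) : Prop :=
  ∃ c > (0 : ℝ), ∫⁻ t in Set.Ioc (0 : ℝ) c, modulus h t / ENNReal.ofReal t < ⊤

/-- A Markov system on a metric space `K`, with vertex set `Fin N` and edge set `E`. -/
structure MarkovSystem (K : Type*) [MetricSpace K] [MeasurableSpace K]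
    (N : ℕ) (E : Type*) [Fintype E] where
  /-- initial vertex of an edge -/
  edgeI : E → Fin N
  /-- terminal vertex of an edge -/
  edgeT : E → Fin N
  /-- the partition `K_1, …, K_N` of `K` -/
  Ki : Fin N → Set K
  Ki_nonempty : ∀ v, (Ki v).Nonempty
  Ki_measurable : ∀ v, MeasurableSet (Ki v)
  Ki_disjoint : ∀ v v', v ≠ v' → Disjoint (Ki v) (Ki v')
  Ki_cover : ∀ x : K, ∃ v, x ∈ Ki v
  /-- the maps `w_e` -/
  w : E → K → K
  w_measurable : ∀ e, Measurable (w e)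
  w_mapsTo : ∀ e, Set.MapsTo (w e) (Ki (edgeI e)) (Ki (edgeT e))
  /-- the probability functions `p_e` -/
  p : E → K → ℝ
  p_measurable : ∀ e, Measurable (p e)
  p_nonneg : ∀ e x, 0 ≤ p e x
  p_sum_one : ∀ x : K, ∑ e, p e x = 1
  p_eq_zero : ∀ e, ∀ x : K, x ∉ Ki (edgeI e) → p e x = 0

namespace MarkovSystem

variable {K : Type*} [MetricSpace K] [MeasurableSpace K] {N : ℕ} {E : Type*} [Fintype E]

/-- Condition of contractiveness on average with rate `a`. -/
def ContractiveOnAvg (sys : MarkovSystem K N E) (a : ℝ) : Prop :=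
  ∀ v : Fin N, ∀ x ∈ sys.Ki v, ∀ y ∈ sys.Ki v,
    ∑ e, sys.p e x * dist (sys.w e x) (sys.w e y) ≤ a * dist x y

/-- `μ` is an invariant Borel probability measure of the Markov system:
`∫ Uf dμ = ∫ f dμ` for every bounded Borel measurable `f`. -/
def IsInvariant (sys : MarkovSystem K N E) (μ : Measure K) : Prop :=
  IsProbabilityMeasure μ ∧
  ∀ f : K → ℝ, Measurable f → (∃ B, ∀ x, |f x| ≤ B) →
    ∫ x, (∑ e, sys.p e x * f (sys.w e x)) ∂μ = ∫ x, f x ∂μ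

end MarkovSystem

/-- `wordProb w p (e₁ :: … :: eₖ) x = p_{e₁}(x) p_{e₂}(w_{e₁}x) ⋯ p_{eₖ}(w_{e_{k-1}} ∘ ⋯ ∘ w_{e₁}x)`. -/
def wordProb {K E : Type*} (w : E → K → K) (p : E → K → ℝ) : List E → K → ℝ
  | [], _ => 1
  | e :: l, x => p e x * wordProb w p l (w e x)

/-- `wordMap w (e₁ :: … :: eₖ) = w_{eₖ} ∘ ⋯ ∘ w_{e₁}`. -/
def wordMap {K E : Type*} (w : E → K → K) : List E → K → K
  | [], x => x
  | e :: l, x => wordMap w l (w e x)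

/-- `M` is the generalized Markov measure on `Σ = E^ℤ` associated with the Markov
system and the invariant measure `μ`. -/
def IsMarkovMeasure {K : Type*} [MetricSpace K] [MeasurableSpace K] {N : ℕ}
    {E : Type*} [Fintype E] [MeasurableSpace E]
    (sys : MarkovSystem K N E) (μ : Measure K) (M : Measure (ℤ → E)) : Prop :=
  IsProbabilityMeasure M ∧
  ∀ (m : ℤ) (es : List E),
    M {σ : ℤ → E | ∀ j : Fin es.length, σ (m + (j : ℕ)) = es.get j}
      = ENNReal.ofReal (∫ x, wordProb sys.w sys.p es x ∂μ)

/-- The left shift on `E^ℤ`. -/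
def shift {E : Type*} (σ : ℤ → E) : ℤ → E := fun k => σ (k + 1)

/-- `comps w σ m = w_{σ₀} ∘ w_{σ₋₁} ∘ ⋯ ∘ w_{σ₋ₘ}`. -/
def comps {K E : Type*} (w : E → K → K) (σ : ℤ → E) : ℕ → K → K
  | 0 => w (σ 0)
  | n + 1 => fun x => comps w σ n (w (σ (-((n : ℤ) + 1))) x)

/-- `F` is the coding map of the contractive Markov system:
`F(σ) = lim_{m → -∞} w_{σ₀} ∘ ⋯ ∘ w_{σₘ} x_{i(σₘ)}` for `M`-a.e. `σ`. -/
def IsCodingMap {K : Type*} [MetricSpace K] [MeasurableSpace K] {N : ℕ}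
    {E : Type*} [Fintype E] [MeasurableSpace E]
    (sys : MarkovSystem K N E) (M : Measure (ℤ → E)) (F : (ℤ → E) → K) : Prop :=
  Measurable F ∧ ∃ xs : Fin N → K, (∀ v, xs v ∈ sys.Ki v) ∧
    ∀ᵐ σ ∂M, Filter.Tendsto
      (fun m : ℕ => comps sys.w σ m (xs (sys.edgeI (σ (-(m : ℤ))))))
      Filter.atTop (nhds (F σ))

/-- Entropy of the finite measurable partition given by the fibers of `π`. -/
noncomputable def partEntropy {Ω : Type*} [MeasurableSpace Ω] (M : Measure Ω)
    {F : Type*} [Fintype F] (π : Ω → F) : ℝ :=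
  -∑ f : F, ((M (π ⁻¹' {f})).toReal * Real.log (M (π ⁻¹' {f})).toReal)

/-- The Kolmogorov–Sinai entropy of a measure-preserving transformation `S`
with respect to `M`: the supremum over all finite measurable partitions `π` of
`inf_n (1/n) H(⋁_{i=0}^{n-1} S^{-i} π)`. -/
noncomputable def ksEntropy {Ω : Type*} [MeasurableSpace Ω] (M : Measure Ω) (S : Ω → Ω) : ℝ≥0∞ :=
  ⨆ (k : ℕ) (π : Ω → Fin k) (_ : ∀ j, MeasurableSet (π ⁻¹' {j})),
    ⨅ n : ℕ, ENNReal.ofReal (((n : ℝ) + 1)⁻¹ *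
      partEntropy M (fun ω => fun j : Fin (n + 1) => π (S^[(j : ℕ)] ω)))

/-!
For a bounded `L`-Lipschitz `f`, `∫ f ∘ F dM` is the limit of `∫ f ∘ Fₘ dM`, where
`Fₘ σ = w_{σ₀} ∘ ⋯ ∘ w_{σ₋ₘ} x_{i(σ₋ₘ)}` depends only on `σ₋ₘ, …, σ₀`; by the defining formula of
`M` this integral is `∫ ∑ₜ pₜ(x) f(wₜ x_{i(t₀)}) dμ(x)` over words `t` of length `m + 1`.
Invariance gives `∫ f dμ = ∫ Uᵐ⁺¹ f dμ = ∫ ∑ₜ pₜ(x) f(wₜ x) dμ(x)`, and for `x ∈ K_v` only words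
starting at `v` carry weight, so contractivity on average bounds the difference of the two
integrands by `L aᵐ⁺¹ d(x, x_v)`. Hence `F_*M` and `μ` agree on bounded Lipschitz functions, which
determine a finite Borel measure on a metric space.
-/

open BoundedContinuousFunction Topology

theorem MeasureTheory.ext_of_forall_integral_eq_of_lipschitz {Ω : Type*} [PseudoMetricSpace Ω]
    [MeasurableSpace Ω] [BorelSpace Ω] {μ ν : Measure Ω} [IsFiniteMeasure μ] [IsFiniteMeasure ν]
    (h : ∀ (f : Ω →ᵇ ℝ) (L : NNReal), LipschitzWith L f → ∫ x, f x ∂μ = ∫ x, f x ∂ν) :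
    μ = ν := by
  have hclosed : ∀ C : Set Ω, IsClosed C → μ C = ν C := by
    intro C hC
    have hδ : ∀ n : ℕ, (0 : ℝ) < 1 / (n + 1) := fun n => Nat.one_div_pos_of_nat
    have hlim := tendsto_one_div_add_atTop_nhds_zero_nat (𝕜 := ℝ)
    have heq : ∀ n : ℕ, ∫ x, (thickenedIndicator (hδ n) C x : ℝ) ∂μ
        = ∫ x, (thickenedIndicator (hδ n) C x : ℝ) ∂ν := fun n =>
      h ((thickenedIndicator (hδ n) C).comp _ NNReal.isometry_coe.lipschitz) _
        (NNReal.isometry_coe.lipschitz.comp (lipschitzWith_thickenedIndicator (hδ n) C))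
    have := tendsto_nhds_unique
      ((tendsto_integral_thickenedIndicator_of_isClosed μ hC hδ hlim).congr heq)
      (tendsto_integral_thickenedIndicator_of_isClosed ν hC hδ hlim)
    exact (measureReal_eq_measureReal_iff).mp this
  exact ext_of_generate_finite _ (BorelSpace.measurable_eq.trans borel_eq_generateFrom_isClosed)
    isPiSystem_isClosed hclosed (hclosed _ isClosed_univ)

theorem Fintype.sum_fin_succ_pi {E M : Type*} [Fintype E] [AddCommMonoid M] {m : ℕ}
    (g : (Fin (m + 1) → E) → M) :
    ∑ t, g t = ∑ e, ∑ s : Fin m → E, g (Fin.cons e s) := by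
  rw [← (Fin.consEquiv fun _ => E).sum_comp g, Fintype.sum_prod_type]
  rfl

namespace MarkovSystem

variable {K : Type*} [MetricSpace K] [MeasurableSpace K] {N : ℕ} {E : Type*} [Fintype E]
  (sys : MarkovSystem K N E)

def markovOp (f : K → ℝ) (x : K) : ℝ := ∑ e, sys.p e x * f (sys.w e x)

theorem markovOp_iterate_apply (m : ℕ) (f : K → ℝ) (x : K) :
    sys.markovOp^[m] f x = ∑ t : Fin m → E,
      wordProb sys.w sys.p (List.ofFn t) x * f (wordMap sys.w (List.ofFn t) x) := by
  induction m generalizing x with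
  | zero => simp [wordProb, wordMap]
  | succ m ih =>
    simp only [Function.iterate_succ_apply', ih, Fintype.sum_fin_succ_pi, List.ofFn_cons,
      wordProb, wordMap, markovOp, Finset.mul_sum, mul_assoc]

theorem markovOp_const (c : ℝ) : sys.markovOp (fun _ => c) = fun _ => c := by
  ext x
  simp [markovOp, ← Finset.sum_mul, sys.p_sum_one]

theorem sum_wordProb (m : ℕ) (x : K) :
    ∑ t : Fin m → E, wordProb sys.w sys.p (List.ofFn t) x = 1 := by
  simpa [Function.iterate_fixed (sys.markovOp_const 1)] using
    (sys.markovOp_iterate_apply m (fun _ => 1) x).symm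

theorem wordProb_nonneg (l : List E) (x : K) : 0 ≤ wordProb sys.w sys.p l x := by
  induction l generalizing x with
  | nil => simp [wordProb]
  | cons e l ih => exact mul_nonneg (sys.p_nonneg e x) (ih _)

theorem wordProb_ofFn_le_one {m : ℕ} (t : Fin m → E) (x : K) :
    wordProb sys.w sys.p (List.ofFn t) x ≤ 1 :=
  sys.sum_wordProb m x ▸ Finset.single_le_sum (fun _ _ => sys.wordProb_nonneg _ x)
    (Finset.mem_univ t)

theorem measurable_wordProb (l : List E) : Measurable (wordProb sys.w sys.p l) := by
  induction l with
  | nil => exact measurable_const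
  | cons e l ih => exact (sys.p_measurable e).mul (ih.comp (sys.w_measurable e))

theorem measurable_wordMap (l : List E) : Measurable (wordMap sys.w l) := by
  induction l with
  | nil => exact measurable_id
  | cons e l ih => exact ih.comp (sys.w_measurable e)

theorem integrable_wordProb (μ : Measure K) [IsFiniteMeasure μ] {m : ℕ} (t : Fin m → E) :
    Integrable (wordProb sys.w sys.p (List.ofFn t)) μ :=
  .of_bound (sys.measurable_wordProb _).aestronglyMeasurable 1 (ae_of_all _ fun x => by
    rw [Real.norm_eq_abs, abs_of_nonneg (sys.wordProb_nonneg _ x)]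
    exact sys.wordProb_ofFn_le_one t x)

theorem abs_sum_wordProb_mul_le {m : ℕ} (x : K) {c : (Fin m → E) → ℝ} {C : ℝ}
    (hc : ∀ t, |c t| ≤ C) :
    |∑ t, wordProb sys.w sys.p (List.ofFn t) x * c t| ≤ C := by
  calc |∑ t, wordProb sys.w sys.p (List.ofFn t) x * c t|
      ≤ ∑ t, wordProb sys.w sys.p (List.ofFn t) x * C := by
        refine (Finset.abs_sum_le_sum_abs _ _).trans (Finset.sum_le_sum fun t _ => ?_)
        rw [abs_mul, abs_of_nonneg (sys.wordProb_nonneg _ x)]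
        exact mul_le_mul_of_nonneg_left (hc t) (sys.wordProb_nonneg _ x)
    _ = C := by rw [← Finset.sum_mul, sys.sum_wordProb, one_mul]

theorem mem_Ki_of_p_ne_zero {e : E} {x : K} (h : sys.p e x ≠ 0) :
    x ∈ sys.Ki (sys.edgeI e) :=
  by_contra fun hx => h (sys.p_eq_zero e x hx)

theorem edgeI_eq_of_p_ne_zero {e : E} {x : K} {v : Fin N} (hv : x ∈ sys.Ki v)
    (h : sys.p e x ≠ 0) : sys.edgeI e = v :=
  by_contra fun hne =>
    Set.disjoint_left.mp (sys.Ki_disjoint _ _ hne) (sys.mem_Ki_of_p_ne_zero h) hv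

theorem measurable_markovOp_iterate (m : ℕ) {f : K → ℝ} (hf : Measurable f) :
    Measurable (sys.markovOp^[m] f) := by
  simp_rw [funext (sys.markovOp_iterate_apply m f)]
  exact Finset.measurable_sum _ fun t _ =>
    (sys.measurable_wordProb _).mul (hf.comp (sys.measurable_wordMap _))

theorem abs_markovOp_iterate_le (m : ℕ) {f : K → ℝ} {C : ℝ} (hf : ∀ x, |f x| ≤ C) (x : K) :
    |sys.markovOp^[m] f x| ≤ C := by
  rw [markovOp_iterate_apply]
  exact sys.abs_sum_wordProb_mul_le x fun t => hf _

theorem sum_wordProb_mul_dist_le {a : ℝ} (ha : 0 ≤ a) (hcontr : sys.ContractiveOnAvg a)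
    (m : ℕ) {v : Fin N} {x y : K} (hx : x ∈ sys.Ki v) (hy : y ∈ sys.Ki v) :
    ∑ t : Fin m → E, wordProb sys.w sys.p (List.ofFn t) x *
      dist (wordMap sys.w (List.ofFn t) x) (wordMap sys.w (List.ofFn t) y) ≤ a ^ m * dist x y := by
  induction m generalizing v x y with
  | zero => simp [wordProb, wordMap]
  | succ m ih =>
    have hstep : ∀ e, sys.p e x * ∑ s : Fin m → E, wordProb sys.w sys.p (List.ofFn s) (sys.w e x) *
          dist (wordMap sys.w (List.ofFn s) (sys.w e x)) (wordMap sys.w (List.ofFn s) (sys.w e y))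
        ≤ sys.p e x * (a ^ m * dist (sys.w e x) (sys.w e y)) := by
      intro e
      by_cases hp : sys.p e x = 0
      · simp [hp]
      have hxe := sys.mem_Ki_of_p_ne_zero hp
      have hv := sys.edgeI_eq_of_p_ne_zero hx hp
      exact mul_le_mul_of_nonneg_left (ih (sys.w_mapsTo e hxe) (sys.w_mapsTo e (hv ▸ hy)))
        (sys.p_nonneg e x)
    calc _ = ∑ e, sys.p e x * ∑ s : Fin m → E, wordProb sys.w sys.p (List.ofFn s) (sys.w e x) *
          dist (wordMap sys.w (List.ofFn s) (sys.w e x))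
            (wordMap sys.w (List.ofFn s) (sys.w e y)) := by
          simp only [Fintype.sum_fin_succ_pi, List.ofFn_cons, wordProb, wordMap,
            Finset.mul_sum, mul_assoc]
      _ ≤ ∑ e, sys.p e x * (a ^ m * dist (sys.w e x) (sys.w e y)) :=
          Finset.sum_le_sum fun e _ => hstep e
      _ = a ^ m * ∑ e, sys.p e x * dist (sys.w e x) (sys.w e y) := by
          rw [Finset.mul_sum]; congr 1; ext e; ring
      _ ≤ a ^ m * (a * dist x y) := by gcongr; exact hcontr v x hx y hy
      _ = a ^ (m + 1) * dist x y := by ring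

theorem abs_markovOp_iterate_sub_le {a : ℝ} (ha : 0 ≤ a) (hcontr : sys.ContractiveOnAvg a)
    {f : K → ℝ} {L : NNReal} (hf : LipschitzWith L f) (m : ℕ) {v : Fin N} {x y : K}
    (hx : x ∈ sys.Ki v) (hy : y ∈ sys.Ki v) :
    |sys.markovOp^[m] f x - ∑ t : Fin m → E,
        wordProb sys.w sys.p (List.ofFn t) x * f (wordMap sys.w (List.ofFn t) y)|
      ≤ L * (a ^ m * dist x y) := by
  rw [markovOp_iterate_apply, ← Finset.sum_sub_distrib]
  calc _ ≤ ∑ t : Fin m → E, wordProb sys.w sys.p (List.ofFn t) x *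
        (L * dist (wordMap sys.w (List.ofFn t) x) (wordMap sys.w (List.ofFn t) y)) := by
        refine (Finset.abs_sum_le_sum_abs _ _).trans (Finset.sum_le_sum fun t _ => ?_)
        rw [← mul_sub, abs_mul, abs_of_nonneg (sys.wordProb_nonneg _ x), ← Real.dist_eq]
        exact mul_le_mul_of_nonneg_left (hf.dist_le_mul _ _) (sys.wordProb_nonneg _ x)
    _ = L * ∑ t : Fin m → E, wordProb sys.w sys.p (List.ofFn t) x *
        dist (wordMap sys.w (List.ofFn t) x) (wordMap sys.w (List.ofFn t) y) := by
        rw [Finset.mul_sum]; congr 1; ext t; ring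
    _ ≤ L * (a ^ m * dist x y) := by
        gcongr; exact sys.sum_wordProb_mul_dist_le ha hcontr m hx hy

theorem sum_wordProb_mul_apply_edgeI_head {m : ℕ} {v : Fin N} {x : K} (hx : x ∈ sys.Ki v)
    (g : (Fin (m + 1) → E) → Fin N → ℝ) :
    ∑ t : Fin (m + 1) → E, wordProb sys.w sys.p (List.ofFn t) x * g t (sys.edgeI (t 0))
      = ∑ t : Fin (m + 1) → E, wordProb sys.w sys.p (List.ofFn t) x * g t v := by
  refine Finset.sum_congr rfl fun t _ => ?_
  by_cases ht : wordProb sys.w sys.p (List.ofFn t) x = 0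
  · rw [ht, zero_mul, zero_mul]
  rw [List.ofFn_succ, wordProb] at ht
  rw [sys.edgeI_eq_of_p_ne_zero hx (left_ne_zero_of_mul ht)]

theorem tendsto_markovOp_iterate_sub_sum_wordProb_mul_edgeI_head {a : ℝ} (ha0 : 0 ≤ a)
    (ha1 : a < 1) (hcontr : sys.ContractiveOnAvg a) {xs : Fin N → K}
    (hxs : ∀ v, xs v ∈ sys.Ki v) {f : K → ℝ} {L : NNReal} (hf : LipschitzWith L f) (x : K) :
    Tendsto (fun m : ℕ => sys.markovOp^[m + 1] f x - ∑ t : Fin (m + 1) → E,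
        wordProb sys.w sys.p (List.ofFn t) x *
          f (wordMap sys.w (List.ofFn t) (xs (sys.edgeI (t 0)))))
      atTop (𝓝 0) := by
  obtain ⟨v, hv⟩ := sys.Ki_cover x
  have hpow : Tendsto (fun m : ℕ => (L : ℝ) * (a ^ (m + 1) * dist x (xs v))) atTop (𝓝 0) := by
    simpa using (((tendsto_pow_atTop_nhds_zero_of_lt_one ha0 ha1).comp
      (tendsto_add_atTop_nat 1)).mul_const (dist x (xs v))).const_mul (L : ℝ)
  refine squeeze_zero_norm (fun m => ?_) hpow
  rw [Real.norm_eq_abs, sys.sum_wordProb_mul_apply_edgeI_head hv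
    fun t u => f (wordMap sys.w (List.ofFn t) (xs u))]
  exact sys.abs_markovOp_iterate_sub_le ha0 hcontr hf (m + 1) hv (hxs v)

variable {sys}

theorem IsInvariant.integral_markovOp_iterate {μ : Measure K} (hμ : sys.IsInvariant μ) (m : ℕ)
    {f : K → ℝ} (hf : Measurable f) {C : ℝ} (hC : ∀ x, |f x| ≤ C) :
    ∫ x, sys.markovOp^[m] f x ∂μ = ∫ x, f x ∂μ := by
  induction m with
  | zero => rfl
  | succ m ih =>
    simp only [Function.iterate_succ_apply']
    rw [← ih]
    exact hμ.2 _ (sys.measurable_markovOp_iterate m hf)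
      ⟨C, sys.abs_markovOp_iterate_le m hC⟩

variable [BorelSpace K]

theorem tendsto_integral_sum_wordProb_mul_edgeI_head {a : ℝ} (ha0 : 0 ≤ a) (ha1 : a < 1)
    (hcontr : sys.ContractiveOnAvg a) {μ : Measure K} (hμ : sys.IsInvariant μ)
    {xs : Fin N → K} (hxs : ∀ v, xs v ∈ sys.Ki v) (f : K →ᵇ ℝ) {L : NNReal}
    (hf : LipschitzWith L f) :
    Tendsto (fun m : ℕ => ∫ x, ∑ t : Fin (m + 1) → E, wordProb sys.w sys.p (List.ofFn t) x *
        f (wordMap sys.w (List.ofFn t) (xs (sys.edgeI (t 0)))) ∂μ)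
      atTop (𝓝 (∫ x, f x ∂μ)) := by
  have := hμ.1
  set A : ℕ → K → ℝ := fun m x => ∑ t : Fin (m + 1) → E, wordProb sys.w sys.p (List.ofFn t) x *
    f (wordMap sys.w (List.ofFn t) (xs (sys.edgeI (t 0))))
  have hfm : Measurable f := f.continuous.measurable
  have hfC : ∀ x, |f x| ≤ ‖f‖ := fun x => Real.norm_eq_abs (f x) ▸ f.norm_coe_le_norm x
  have hA_le (m : ℕ) (x : K) : |A m x| ≤ ‖f‖ := sys.abs_sum_wordProb_mul_le x fun t => hfC _
  have hA_int (m : ℕ) : Integrable (A m) μ :=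
    .of_bound (Finset.measurable_sum _ fun t _ =>
      (sys.measurable_wordProb _).mul measurable_const).aestronglyMeasurable _
      (ae_of_all _ (hA_le m))
  have hU_int (m : ℕ) : Integrable (sys.markovOp^[m] f) μ :=
    .of_bound (sys.measurable_markovOp_iterate m hfm).aestronglyMeasurable _
      (ae_of_all _ (sys.abs_markovOp_iterate_le m hfC))
  have hgap : Tendsto (fun m => ∫ x, (sys.markovOp^[m + 1] f x - A m x) ∂μ) atTop (𝓝 0) := by
    simpa using tendsto_integral_of_dominated_convergence (fun _ => ‖f‖ + ‖f‖)
      (fun m => ((hU_int (m + 1)).sub (hA_int m)).aestronglyMeasurable) (integrable_const _)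
      (fun m => ae_of_all _ fun x =>
        (abs_sub _ _).trans (add_le_add (sys.abs_markovOp_iterate_le _ hfC x) (hA_le m x)))
      (ae_of_all _
        (sys.tendsto_markovOp_iterate_sub_sum_wordProb_mul_edgeI_head ha0 ha1 hcontr hxs hf))
  have hA_eq (m : ℕ) : ∫ x, A m x ∂μ
      = ∫ x, f x ∂μ - ∫ x, (sys.markovOp^[m + 1] f x - A m x) ∂μ := by
    rw [integral_sub (hU_int _) (hA_int m), hμ.integral_markovOp_iterate _ hfm hfC]
    ring
  have h := (tendsto_const_nhds (x := ∫ x, f x ∂μ)).sub hgap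
  rw [sub_zero] at h
  exact h.congr fun m => (hA_eq m).symm

end MarkovSystem

def pastBlock {E : Type*} (m : ℕ) (σ : ℤ → E) : Fin (m + 1) → E := fun j => σ (-m + j)

theorem comps_eq_wordMap_pastBlock {K E : Type*} (w : E → K → K) (σ : ℤ → E) (m : ℕ) (x : K) :
    comps w σ m x = wordMap w (List.ofFn (pastBlock m σ)) x := by
  induction m generalizing x with
  | zero => simp [comps, wordMap, pastBlock]
  | succ m ih =>
    have hblock : List.ofFn (pastBlock (m + 1) σ) = σ (-(m + 1)) :: List.ofFn (pastBlock m σ) := by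
      rw [List.ofFn_succ]
      congr 2 with j
      simp only [pastBlock, Fin.val_succ]
      push_cast
      ring_nf
    rw [hblock, wordMap, ← ih]
    rfl

theorem measurable_pastBlock {E : Type*} [MeasurableSpace E] (m : ℕ) :
    Measurable (pastBlock (E := E) m) :=
  measurable_pi_lambda _ fun _ => measurable_pi_apply _

namespace IsMarkovMeasure

variable {K : Type*} [MetricSpace K] [MeasurableSpace K] {N : ℕ} {E : Type*} [Fintype E]
  [MeasurableSpace E] [MeasurableSingletonClass E] {sys : MarkovSystem K N E} {μ : Measure K}
  {M : Measure (ℤ → E)}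

theorem map_pastBlock_singleton (hM : IsMarkovMeasure sys μ M) (m : ℕ) (t : Fin (m + 1) → E) :
    M.map (pastBlock m) {t} = ENNReal.ofReal (∫ x, wordProb sys.w sys.p (List.ofFn t) x ∂μ) := by
  rw [Measure.map_apply (measurable_pastBlock m) (measurableSet_singleton t), ← hM.2 (-m)]
  congr 1
  ext σ
  simp only [Set.mem_preimage, Set.mem_singleton_iff, funext_iff, pastBlock, Set.mem_ofPred_eq,
    List.get_ofFn]
  rw [Fin.forall_iff, Fin.forall_iff]
  simp

theorem integral_comp_pastBlock (hM : IsMarkovMeasure sys μ M) (m : ℕ)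
    (g : (Fin (m + 1) → E) → ℝ) :
    ∫ σ, g (pastBlock m σ) ∂M
      = ∑ t, (∫ x, wordProb sys.w sys.p (List.ofFn t) x ∂μ) * g t := by
  have := hM.1
  rw [← integral_map (measurable_pastBlock m).aemeasurable
    (measurable_of_finite g).aestronglyMeasurable, integral_fintype (.of_finite)]
  refine Finset.sum_congr rfl fun t _ => ?_
  rw [measureReal_def, hM.map_pastBlock_singleton, smul_eq_mul,
    ENNReal.toReal_ofReal (integral_nonneg fun x => sys.wordProb_nonneg _ x)]

end IsMarkovMeasure

namespace IsCodingMap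

variable {K : Type*} [MetricSpace K] [MeasurableSpace K] [BorelSpace K] {N : ℕ} {E : Type*}
  [Fintype E] [MeasurableSpace E] [MeasurableSingletonClass E] {sys : MarkovSystem K N E}
  {μ : Measure K} {M : Measure (ℤ → E)} {F : (ℤ → E) → K}

theorem integral_comp {a : ℝ} (ha0 : 0 ≤ a) (ha1 : a < 1) (hcontr : sys.ContractiveOnAvg a)
    (hμ : sys.IsInvariant μ) (hM : IsMarkovMeasure sys μ M) (hF : IsCodingMap sys M F)
    (f : K →ᵇ ℝ) {L : NNReal} (hf : LipschitzWith L f) :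
    ∫ σ, f (F σ) ∂M = ∫ x, f x ∂μ := by
  obtain ⟨-, xs, hxs, htend⟩ := hF
  have := hμ.1
  have := hM.1
  set g : (m : ℕ) → (Fin (m + 1) → E) → ℝ :=
    fun m t => f (wordMap sys.w (List.ofFn t) (xs (sys.edgeI (t 0))))
  have hg (m : ℕ) (σ : ℤ → E) :
      f (comps sys.w σ m (xs (sys.edgeI (σ (-m))))) = g m (pastBlock m σ) := by
    simp [g, comps_eq_wordMap_pastBlock, pastBlock]
  have hM_lim : Tendsto (fun m => ∫ σ, g m (pastBlock m σ) ∂M) atTop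
      (𝓝 (∫ σ, f (F σ) ∂M)) :=
    tendsto_integral_of_dominated_convergence (fun _ => ‖f‖)
      (fun m => ((measurable_of_finite (g m)).comp (measurable_pastBlock m)).aestronglyMeasurable)
      (integrable_const _) (fun m => ae_of_all _ fun σ => f.norm_coe_le_norm _)
      (htend.mono fun σ hσ => by
        simpa only [Function.comp_def, hg] using (f.continuous.tendsto _).comp hσ)
  refine tendsto_nhds_unique hM_lim
    ((MarkovSystem.tendsto_integral_sum_wordProb_mul_edgeI_head ha0 ha1 hcontr hμ hxs f hf).congr
      fun m => ?_)
  rw [hM.integral_comp_pastBlock, integral_finsetSum _ fun t _ =>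
    (sys.integrable_wordProb μ _).mul_const _]
  exact Finset.sum_congr rfl fun t _ => integral_mul_const _ _

end IsCodingMap

theorem pushforward_of_markov_measure_eq_invariant_general
    {K : Type*} [MetricSpace K] [MeasurableSpace K] [BorelSpace K]
    {N : ℕ} {E : Type*} [Fintype E] [MeasurableSpace E] [MeasurableSingletonClass E]
    (sys : MarkovSystem K N E) (a : ℝ) (ha0 : 0 < a) (ha1 : a < 1)
    (hcontr : sys.ContractiveOnAvg a)
    (μ : Measure K) (hμ : sys.IsInvariant μ)
    (M : Measure (ℤ → E)) (hM : IsMarkovMeasure sys μ M)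
    (F : (ℤ → E) → K) (hF : IsCodingMap sys M F) :
    Measure.map F M = μ := by
  have := hμ.1
  have := hM.1
  have := Measure.isProbabilityMeasure_map (μ := M) hF.1.aemeasurable
  refine ext_of_forall_integral_eq_of_lipschitz fun f L hf => ?_
  rw [integral_map hF.1.aemeasurable f.continuous.aestronglyMeasurable]
  exact hF.integral_comp ha0.le ha1 hcontr hμ hM f hf

/-- If the invariant probability measure of the contractive Markov system is
unique, then the coding map pushes the generalized Markov measure forward to it:
`F_*M = μ`. -/
theorem pushforward_of_markov_measure_eq_invariant
    {K : Type*} [MetricSpace K] [MeasurableSpace K] [BorelSpace K]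
    {N : ℕ} {E : Type*} [Fintype E] [MeasurableSpace E] [MeasurableSingletonClass E]
    (sys : MarkovSystem K N E) (a : ℝ) (ha0 : 0 < a) (ha1 : a < 1)
    (hcontr : sys.ContractiveOnAvg a)
    (hrelcpt : ∀ s : Set K, Bornology.IsBounded s → IsCompact (closure s))
    (hopen : ∀ v, IsOpen (sys.Ki v))
    (δ : ℝ) (hδpos : 0 < δ)
    (hδ : ∀ e, ∀ x ∈ sys.Ki (sys.edgeI e), δ ≤ sys.p e x)
    (hdini : ∀ e, DiniContinuous fun x : sys.Ki (sys.edgeI e) => sys.p e (x : K))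
    (hsurj : Function.Surjective sys.edgeI)
    (μ : Measure K) (hμ : sys.IsInvariant μ)
    (huniq : ∀ ν : Measure K, sys.IsInvariant ν → ν = μ)
    (M : Measure (ℤ → E)) (hM : IsMarkovMeasure sys μ M)
    (F : (ℤ → E) → K) (hF : IsCodingMap sys M F) :
    Measure.map F M = μ :=
  pushforward_of_markov_measure_eq_invariant_general sys a ha0 ha1 hcontr μ hμ M hM F hF
end

section
/- Consider ℝ² with the ℓ¹-norm ‖·‖₁, the sets K₁ := {(x,y) ∈ ℝ² : y ≥ 1/2} and K₂ := {(x,y) ∈ ℝ² : y ≤ −1/2}, the maps w₁(x,y) := (−x/2 − 1, −3y/2 + 1/4), w₂(x,y) := (−3x/2 + 1, y/4 + 3/8), w₃(x,y) := (−|x|/2 + 1, −3y/2 − 1/4), w₄(x,y) := (3|x|/2 − 1, −y/4 + 3/8), and the probability functions p₁(x,y) := ((1/15)sin²‖(x,y)‖₁ + 53/105)·1_{K₁}(x,y), p₂(x,y) := ((1/15)cos²‖(x,y)‖₁ + 3/7)·1_{K₁}(x,y), p₃(x,y) := ((1/15)sin²‖(x,y)‖₁ + 53/105)·1_{K₂}(x,y),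 p₄(x,y) := ((1/15)cos²‖(x,y)‖₁ + 3/7)·1_{K₂}(x,y). Then for each i ∈ {1,2} and all u, v ∈ K_i, one has ∑_{e=1}^4 p_e(u) ‖w_e(u) − w_e(v)‖₁ ≤ (209/210) ‖u − v‖₁; i.e. this system satisfies the condition of contractiveness on average with average contracting rate 209/210. -/
open Real

/-- The ℓ¹-norm on ℝ². -/
noncomputable def l1norm (u : ℝ × ℝ) : ℝ := |u.1| + |u.2|

/-- `K₁ = {(x,y) : y ≥ 1/2}`. -/
def Kone : Set (ℝ × ℝ) := {u | 1 / 2 ≤ u.2}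

/-- `K₂ = {(x,y) : y ≤ -1/2}`. -/
def Ktwo : Set (ℝ × ℝ) := {u | u.2 ≤ -(1 / 2)}

noncomputable def wOne (u : ℝ × ℝ) : ℝ × ℝ := (-(1 / 2) * u.1 - 1, -(3 / 2) * u.2 + 1 / 4)
noncomputable def wTwo (u : ℝ × ℝ) : ℝ × ℝ := (-(3 / 2) * u.1 + 1, (1 / 4) * u.2 + 3 / 8)
noncomputable def wThree (u : ℝ × ℝ) : ℝ × ℝ := (-(1 / 2) * |u.1| + 1, -(3 / 2) * u.2 - 1 / 4)
noncomputable def wFour (u : ℝ × ℝ) : ℝ × ℝ := ((3 / 2) * |u.1| - 1, -(1 / 4) * u.2 + 3 / 8)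

noncomputable def pOne (u : ℝ × ℝ) : ℝ :=
  Kone.indicator (fun v => (1 / 15) * Real.sin (l1norm v) ^ 2 + 53 / 105) u
noncomputable def pTwo (u : ℝ × ℝ) : ℝ :=
  Kone.indicator (fun v => (1 / 15) * Real.cos (l1norm v) ^ 2 + 3 / 7) u
noncomputable def pThree (u : ℝ × ℝ) : ℝ :=
  Ktwo.indicator (fun v => (1 / 15) * Real.sin (l1norm v) ^ 2 + 53 / 105) u
noncomputable def pFour (u : ℝ × ℝ) : ℝ :=
  Ktwo.indicator (fun v => (1 / 15) * Real.cos (l1norm v) ^ 2 + 3 / 7) u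

/-!
On `Kᵢ` only two maps carry weight, `p = s/15 + 53/105` and `q = (1 - s)/15 + 3/7` with
`s = sin² ‖u‖₁`, and `p + q = 1`. In the `ℓ¹`-norm the first map of each pair scales the
`x`- and `y`-differences by at most `1/2` and `3/2`, the second by at most `3/2` and `1/4`
(on `K₂` because `|·|` is `1`-Lipschitz). The averaged factors are `1/2 + q ≤ 209/210` on the
`x`-difference and `1/4 + 5p/4 ≤ 27/28` on the `y`-difference.
-/

lemma abs_mul_sub_mul (c x y : ℝ) : |c * x - c * y| = |c| * |x - y| := by
  rw [← mul_sub, abs_mul]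

lemma l1norm_sub (u v : ℝ × ℝ) : l1norm (u - v) = |u.1 - v.1| + |u.2 - v.2| := rfl

lemma l1norm_wOne_sub (u v : ℝ × ℝ) :
    l1norm (wOne u - wOne v) = 1 / 2 * |u.1 - v.1| + 3 / 2 * |u.2 - v.2| := by
  simp only [l1norm, wOne, Prod.fst_sub, Prod.snd_sub, sub_sub_sub_cancel_right,
    add_sub_add_right_eq_sub, abs_mul_sub_mul]
  norm_num

lemma l1norm_wTwo_sub (u v : ℝ × ℝ) :
    l1norm (wTwo u - wTwo v) = 3 / 2 * |u.1 - v.1| + 1 / 4 * |u.2 - v.2| := by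
  simp only [l1norm, wTwo, Prod.fst_sub, Prod.snd_sub, add_sub_add_right_eq_sub, abs_mul_sub_mul]
  norm_num

lemma l1norm_wThree_sub_le (u v : ℝ × ℝ) :
    l1norm (wThree u - wThree v) ≤ 1 / 2 * |u.1 - v.1| + 3 / 2 * |u.2 - v.2| := by
  simp only [l1norm, wThree, Prod.fst_sub, Prod.snd_sub, sub_sub_sub_cancel_right,
    add_sub_add_right_eq_sub, abs_mul_sub_mul]
  norm_num
  exact abs_abs_sub_abs_le_abs_sub u.1 v.1

lemma l1norm_wFour_sub_le (u v : ℝ × ℝ) :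
    l1norm (wFour u - wFour v) ≤ 3 / 2 * |u.1 - v.1| + 1 / 4 * |u.2 - v.2| := by
  simp only [l1norm, wFour, Prod.fst_sub, Prod.snd_sub, sub_sub_sub_cancel_right,
    add_sub_add_right_eq_sub, abs_mul_sub_mul]
  norm_num
  exact abs_abs_sub_abs_le_abs_sub u.1 v.1

lemma convex_mix_le {p q a b A B : ℝ} (hp : 0 ≤ p) (hq : 0 ≤ q) (hpq : p + q = 1)
    (hp_le : p ≤ 4 / 7) (hq_le : q ≤ 52 / 105) (ha : 0 ≤ a) (hb : 0 ≤ b)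
    (hA : A ≤ 1 / 2 * a + 3 / 2 * b) (hB : B ≤ 3 / 2 * a + 1 / 4 * b) :
    p * A + q * B ≤ 209 / 210 * (a + b) :=
  calc p * A + q * B ≤ p * (1 / 2 * a + 3 / 2 * b) + q * (3 / 2 * a + 1 / 4 * b) := by gcongr
    _ ≤ 209 / 210 * (a + b) := by
      nlinarith [mul_le_mul_of_nonneg_right hq_le ha, mul_le_mul_of_nonneg_right hp_le hb]

lemma sin_cos_mix_le (t : ℝ) {a b A B : ℝ} (ha : 0 ≤ a) (hb : 0 ≤ b)
    (hA : A ≤ 1 / 2 * a + 3 / 2 * b) (hB : B ≤ 3 / 2 * a + 1 / 4 * b) :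
    (1 / 15 * sin t ^ 2 + 53 / 105) * A + (1 / 15 * cos t ^ 2 + 3 / 7) * B
      ≤ 209 / 210 * (a + b) :=
  convex_mix_le (by positivity) (by positivity) (by linarith [sin_sq_add_cos_sq t])
    (by linarith [sin_sq_le_one t]) (by linarith [cos_sq_le_one t]) ha hb hA hB

lemma disjoint_Kone_Ktwo : Disjoint Kone Ktwo :=
  Set.disjoint_left.2 fun u (hu : 1 / 2 ≤ u.2) (hu' : u.2 ≤ -(1 / 2)) => by linarith

/-- The example system on `(ℝ², ‖·‖₁)` satisfies the condition of contractiveness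
on average with average contracting rate `209/210`. -/
theorem example_CMS_contractiveness_on_average :
    ∀ u v : ℝ × ℝ, (u ∈ Kone ∧ v ∈ Kone) ∨ (u ∈ Ktwo ∧ v ∈ Ktwo) →
      pOne u * l1norm (wOne u - wOne v) + pTwo u * l1norm (wTwo u - wTwo v)
        + pThree u * l1norm (wThree u - wThree v) + pFour u * l1norm (wFour u - wFour v)
          ≤ (209 / 210) * l1norm (u - v) := by
  rintro u v (⟨hu, -⟩ | ⟨hu, -⟩) <;> rw [l1norm_sub]
  · have hu' : u ∉ Ktwo := disjoint_Kone_Ktwo.notMem_of_mem_left hu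
    simp only [pOne, pTwo, pThree, pFour, Set.indicator_of_mem hu, Set.indicator_of_notMem hu',
      zero_mul, add_zero]
    exact sin_cos_mix_le _ (abs_nonneg _) (abs_nonneg _)
      (l1norm_wOne_sub u v).le (l1norm_wTwo_sub u v).le
  · have hu' : u ∉ Kone := disjoint_Kone_Ktwo.notMem_of_mem_right hu
    simp only [pOne, pTwo, pThree, pFour, Set.indicator_of_mem hu, Set.indicator_of_notMem hu',
      zero_mul, zero_add]
    exact sin_cos_mix_le _ (abs_nonneg _) (abs_nonneg _)
      (l1norm_wThree_sub_le u v) (l1norm_wFour_sub_le u v)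
end
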